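/- For every d < 0 there exist T_d ∈ (0, +∞) and a smooth function u_d : (−T_d, T_d) → ℝ such that: u_d(0) = d and u_d'(0) = 0; 1 − u_d'(t)² > 0 and (1 − u_d'(t)²)^{k−1} ( u_d''(t) + ((n−2k)/(2k)) (1 − u_d'(t)²) ) = (n/(2k)) e^{−2k u_d(t)} for all t ∈ (−T_d, T_d); H(u_d(t), u_d'(t)) = H(d,0) < 0 for all t ∈ (−T_d, T_d); and, as t → ±T_d, u_d(t) → −(1/n) ln|H(d,0)|, u_d'(t) → ±1, and u_d''(t) → +∞. -/

import Mathlib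

open Real Set Filter Topology

/-- The first-integral function H(x,y) = e^{(2k−n)x}(1 − y²)^k − e^{−nx}. -/
noncomputable def Hfun (n k : ℕ) (x y : ℝ) : ℝ :=
  Real.exp ((2 * k - n : ℝ) * x) * (1 - y ^ 2) ^ k - Real.exp (-(n : ℝ) * x)

set_option linter.unusedSectionVars false

noncomputable section Stmt17

namespace Stmt17

variable (n k : ℕ) (d : ℝ)

/-- first integral constant -/
def cst : ℝ := Real.exp ((2*(k:ℝ) - n) * d) - Real.exp (-(n:ℝ) * d)

def xstar : ℝ := -(1/(n:ℝ)) * Real.log (-(cst n k d))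

def gfun (x : ℝ) : ℝ :=
  cst n k d * Real.exp (((n:ℝ) - 2*k) * x) + Real.exp (-(2*(k:ℝ)) * x)

def gd (x : ℝ) : ℝ :=
  (((n:ℝ) - 2*k)) * cst n k d * Real.exp (((n:ℝ) - 2*k) * x)
    - (2*(k:ℝ)) * Real.exp (-(2*(k:ℝ)) * x)

def phi (x : ℝ) : ℝ := 1 - (gfun n k d x) ^ ((1:ℝ)/k)

def phid (x : ℝ) : ℝ := -((1/(k:ℝ)) * (gfun n k d x) ^ ((1:ℝ)/k - 1) * gd n k d x)

def Phi (x : ℝ) : ℝ := if xstar n k d ≤ x then x - xstar n k d + 1 else phi n k d x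

def X0 : ℝ → ℝ := Function.invFun (Phi n k d)

def Dfun (x : ℝ) : ℝ := (2*(k:ℝ) - n) * cst n k d + 2*(k:ℝ) * Real.exp (-(n:ℝ) * x)

def Gfun (y : ℝ) : ℝ :=
  2*(k:ℝ) * Real.exp ((2*(k:ℝ) - n) * X0 n k d (y^2)) * (1 - y^2)^(k-1)
    / Dfun n k d (X0 n k d (y^2))

def Gc (y : ℝ) : ℝ := Gfun n k d (max (-1) (min 1 y))

def tau (y : ℝ) : ℝ := ∫ s in (0:ℝ)..y, Gc n k d s

def Tmax : ℝ := tau n k d 1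

def Yfun : ℝ → ℝ := Function.invFun (tau n k d)

def ufun (t : ℝ) : ℝ := X0 n k d ((Yfun n k d t)^2)

end Stmt17

section lemmas

namespace Stmt17

variable {n k : ℕ} {d : ℝ}

section basics
variable (hn : 3 ≤ n) (hk2 : 2 ≤ k) (hd : d < 0)
include hn hk2 hd

lemma cst_neg : cst n k d < 0 := by
  have hk : (0:ℝ) < k := by positivity
  have : (2*(k:ℝ) - n) * d < -(n:ℝ) * d := by nlinarith
  simpa [cst, sub_neg] using Real.exp_lt_exp.2 this

lemma exp_xstar : Real.exp (-(n:ℝ) * xstar n k d) = -(cst n k d) := by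
  have hn0 : (0:ℝ) < n := by positivity
  have hc : 0 < -(cst n k d) := by linarith [cst_neg hn hk2 hd]
  have : -(n:ℝ) * xstar n k d = Real.log (-(cst n k d)) := by
    rw [xstar]; field_simp
  rw [this, Real.exp_log hc]

lemma gfun_d : gfun n k d d = 1 := by
  have h1 : ((n:ℝ) - 2*k) * d + (-(n:ℝ) * d) = (-(2*(k:ℝ))) * d := by ring
  have h2 : (2*(k:ℝ) - n) * d + ((n:ℝ) - 2*k) * d = 0 := by ring
  simp only [gfun, cst, sub_mul, ← Real.exp_add]
  ring_nf
  simp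

lemma gfun_xstar : gfun n k d (xstar n k d) = 0 := by
  have h1 : -(2*(k:ℝ)) * xstar n k d
      = ((n:ℝ) - 2*k) * xstar n k d + (-(n:ℝ) * xstar n k d) := by ring
  simp only [gfun]
  rw [h1, Real.exp_add, exp_xstar hn hk2 hd]
  ring

lemma d_lt_xstar : d < xstar n k d := by
  have hn0 : (0:ℝ) < n := by positivity
  have hc : 0 < -(cst n k d) := by linarith [cst_neg hn hk2 hd]
  have h1 : -(cst n k d) < Real.exp (-(n:ℝ)*d) := by
    have := Real.exp_pos ((2*(k:ℝ) - n) * d)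
    simp only [cst]; linarith
  have h2 : Real.log (-(cst n k d)) < -(n:ℝ)*d := by
    calc Real.log (-(cst n k d)) < Real.log (Real.exp (-(n:ℝ)*d)) :=
        Real.log_lt_log hc h1
    _ = -(n:ℝ)*d := Real.log_exp _
  have hinv : (0:ℝ) < 1/(n:ℝ) := by positivity
  have h4 : (1/(n:ℝ)) * (-(n:ℝ)*d) = -d := by field_simp
  have h5 := mul_lt_mul_of_pos_left h2 hinv
  rw [xstar]
  linarith

end basics

end Stmt17

end lemmas

namespace Stmt17

variable {n k : ℕ} {d : ℝ}

section calc1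
variable (hn : 3 ≤ n) (hk2 : 2 ≤ k) (hd : d < 0)

lemma hasDerivAt_gfun (x : ℝ) : HasDerivAt (gfun n k d) (gd n k d x) x := by
  have h1 : HasDerivAt (fun x : ℝ => Real.exp (((n:ℝ) - 2*k) * x))
      (Real.exp (((n:ℝ) - 2*k) * x) * ((n:ℝ) - 2*k)) x := by
    simpa using ((hasDerivAt_id x).const_mul ((n:ℝ) - 2*k)).exp
  have h2 : HasDerivAt (fun x : ℝ => Real.exp (-(2*(k:ℝ)) * x))
      (Real.exp (-(2*(k:ℝ)) * x) * (-(2*(k:ℝ)))) x := by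
    simpa using ((hasDerivAt_id x).const_mul (-(2*(k:ℝ)))).exp
  have := (h1.const_mul (cst n k d)).add h2
  convert this using 1
  case e'_4 => rfl
  case e'_5 => rfl
  case e'_8 => rfl
  case e'_9 => simp [gd]; ring

lemma contDiff_gfun : ContDiff ℝ (⊤:ℕ∞) (gfun n k d) := by
  apply ContDiff.add
  · exact ContDiff.mul contDiff_const (Real.contDiff_exp.comp (contDiff_const.mul contDiff_id))
  · exact Real.contDiff_exp.comp (contDiff_const.mul contDiff_id)

include hn hk2 hd

lemma gd_neg {x : ℝ} (hx : x ≤ xstar n k d) : gd n k d x < 0 := by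
  have hk0 : (0:ℝ) < k := by positivity
  have hn0 : (0:ℝ) < n := by positivity
  have hc : 0 < -(cst n k d) := by linarith [cst_neg hn hk2 hd]
  have e1 : Real.exp (-(2*(k:ℝ))*x) * Real.exp ((n:ℝ)*x) = Real.exp (((n:ℝ)-2*(k:ℝ))*x) := by
    rw [← Real.exp_add]; ring_nf
  have hsplit : gd n k d x
      = Real.exp (-(2*(k:ℝ)) * x) * (((n:ℝ) - 2*k) * cst n k d * Real.exp ((n:ℝ) * x) - 2*k) := by
    simp only [gd]
    linear_combination (-(((n:ℝ) - 2*k) * cst n k d)) * e1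
  rw [hsplit]
  have hepos := Real.exp_pos (-(2*(k:ℝ)) * x)
  have hpos2 := Real.exp_pos ((n:ℝ) * x)
  rcases le_total (2*(k:ℝ)) (n:ℝ) with h | h
  · have h5 : ((n:ℝ) - 2*k) * cst n k d ≤ 0 := by nlinarith
    have h6 : ((n:ℝ) - 2*k) * cst n k d * Real.exp ((n:ℝ) * x) - 2*k < 0 := by nlinarith
    exact mul_neg_of_pos_of_neg hepos h6
  · -- n < 2k : use exp (n x) ≤ exp (n x*) = (-c)⁻¹
    have hxs : Real.exp ((n:ℝ) * x) ≤ (-(cst n k d))⁻¹ := by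
      have h1 : Real.exp ((n:ℝ) * xstar n k d) = (-(cst n k d))⁻¹ := by
        rw [← exp_xstar hn hk2 hd, ← Real.exp_neg]; ring_nf
      rw [← h1]
      exact Real.exp_le_exp.2 (by nlinarith)
    have hcoef : 0 ≤ ((n:ℝ) - 2*k) * cst n k d := by nlinarith
    have : ((n:ℝ) - 2*k) * cst n k d * Real.exp ((n:ℝ) * x)
        ≤ ((n:ℝ) - 2*k) * cst n k d * (-(cst n k d))⁻¹ := by
      exact mul_le_mul_of_nonneg_left hxs hcoef
    have heq : ((n:ℝ) - 2*k) * cst n k d * (-(cst n k d))⁻¹ = -((n:ℝ) - 2*k) := by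
      have hc0 : cst n k d ≠ 0 := (cst_neg hn hk2 hd).ne
      field_simp
    have h6 : ((n:ℝ) - 2*k) * cst n k d * Real.exp ((n:ℝ) * x) - 2*k < 0 := by nlinarith
    exact mul_neg_of_pos_of_neg hepos h6

lemma strictAntiOn_gfun : StrictAntiOn (gfun n k d) (Iic (xstar n k d)) := by
  apply strictAntiOn_of_deriv_neg (convex_Iic _)
    ((contDiff_gfun (n:=n) (k:=k) (d:=d)).continuous.continuousOn)
  intro x hx
  rw [interior_Iic] at hx
  rw [(hasDerivAt_gfun x).deriv]
  exact gd_neg hn hk2 hd (le_of_lt hx)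

lemma gfun_pos {x : ℝ} (hx : x < xstar n k d) : 0 < gfun n k d x := by
  have := strictAntiOn_gfun hn hk2 hd (Set.mem_Iic.2 hx.le) (Set.mem_Iic.2 le_rfl) hx
  rw [gfun_xstar hn hk2 hd] at this
  exact this

lemma phi_d : phi n k d d = 0 := by
  simp [phi, gfun_d hn hk2 hd]

lemma phi_xstar : phi n k d (xstar n k d) = 1 := by
  have hk0 : ((k:ℝ))⁻¹ ≠ 0 := by
    have : (0:ℝ) < k := by positivity
    positivity
  simp [phi, gfun_xstar hn hk2 hd, Real.zero_rpow hk0]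

lemma hasDerivAt_phi {x : ℝ} (hx : x < xstar n k d) :
    HasDerivAt (phi n k d) (phid n k d x) x := by
  have hg := hasDerivAt_gfun (n:=n) (k:=k) (d:=d) x
  have hgx : gfun n k d x ≠ 0 := ne_of_gt (gfun_pos hn hk2 hd hx)
  have := (hg.rpow_const (p := (1:ℝ)/k) (Or.inl hgx)).const_sub 1
  convert this using 1
  case e'_4 => rfl
  case e'_5 => rfl
  case e'_8 => rfl
  case e'_9 => simp only [phid]; ring

lemma phid_pos {x : ℝ} (hx : x < xstar n k d) : 0 < phid n k d x := by
  have h1 := gfun_pos hn hk2 hd hx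
  have h2 := gd_neg hn hk2 hd (le_of_lt hx)
  have h3 : (0:ℝ) < (gfun n k d x) ^ ((1:ℝ)/k - 1) := Real.rpow_pos_of_pos h1 _
  have hk0 : (0:ℝ) < 1/(k:ℝ) := by positivity
  have h4 : 0 < -gd n k d x := by linarith
  have : 0 < (1/(k:ℝ)) * (gfun n k d x) ^ ((1:ℝ)/k - 1) * (-gd n k d x) :=
    mul_pos (mul_pos hk0 h3) h4
  simp only [phid]; nlinarith

lemma contDiffAt_phi {x : ℝ} (hx : x < xstar n k d) :
    ContDiffAt ℝ (⊤:ℕ∞) (phi n k d) x := by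
  have hgx : gfun n k d x ≠ 0 := ne_of_gt (gfun_pos hn hk2 hd hx)
  have : ContDiffAt ℝ (⊤:ℕ∞) (fun x => (gfun n k d x) ^ ((1:ℝ)/k)) x :=
    (contDiff_gfun (n:=n) (k:=k) (d:=d)).contDiffAt.rpow_const_of_ne hgx
  exact contDiffAt_const.sub this

lemma continuous_phi : Continuous (phi n k d) := by
  apply continuous_const.sub
  rw [continuous_iff_continuousAt]
  intro x
  have hk0 : (0:ℝ) < 1/(k:ℝ) := by positivity
  exact (Real.continuousAt_rpow_const _ _ (Or.inr hk0.le)).comp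
    (contDiff_gfun (n:=n) (k:=k) (d:=d)).continuous.continuousAt

lemma phi_lt_one {x : ℝ} (hx : x < xstar n k d) : phi n k d x < 1 := by
  have := Real.rpow_pos_of_pos (gfun_pos hn hk2 hd hx) ((1:ℝ)/k)
  simp only [phi]; linarith

lemma strictMonoOn_phi : StrictMonoOn (phi n k d) (Iic (xstar n k d)) := by
  apply strictMonoOn_of_deriv_pos (convex_Iic _) (continuous_phi hn hk2 hd).continuousOn
  intro x hx
  rw [interior_Iic] at hx
  rw [(hasDerivAt_phi hn hk2 hd hx).deriv]
  exact phid_pos hn hk2 hd hx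

end calc1

end Stmt17

namespace Stmt17

section chunk3
variable {n k : ℕ} {d : ℝ}
variable (hn : 3 ≤ n) (hk2 : 2 ≤ k) (hd : d < 0)
include hn hk2 hd

lemma Phi_of_lt {x : ℝ} (hx : x < xstar n k d) : Phi n k d x = phi n k d x :=
  if_neg (not_le.2 hx)

lemma Phi_xstar : Phi n k d (xstar n k d) = 1 := by simp [Phi]

lemma Phi_d : Phi n k d d = 0 := by
  rw [Phi_of_lt hn hk2 hd (d_lt_xstar hn hk2 hd), phi_d hn hk2 hd]

lemma strictMono_Phi : StrictMono (Phi n k d) := by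
  intro a b hab
  rcases le_or_gt (xstar n k d) a with ha | ha
  · rw [Phi, if_pos ha, Phi, if_pos (ha.trans hab.le)]
    linarith
  · rcases le_or_gt (xstar n k d) b with hb | hb
    · rw [Phi_of_lt hn hk2 hd ha, Phi, if_pos hb]
      have := phi_lt_one hn hk2 hd ha
      linarith
    · rw [Phi_of_lt hn hk2 hd ha, Phi_of_lt hn hk2 hd hb]
      exact strictMonoOn_phi hn hk2 hd (Set.mem_Iic.2 ha.le) (Set.mem_Iic.2 hb.le) hab

lemma continuous_Phi : Continuous (Phi n k d) := by
  apply Continuous.if_le ((continuous_id.sub continuous_const).add continuous_const)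
    (continuous_phi hn hk2 hd) continuous_const continuous_id
  intro x hx
  simp only [id_eq] at hx
  subst hx
  simp [phi_xstar hn hk2 hd]

lemma tendsto_Phi_atTop : Tendsto (Phi n k d) atTop atTop := by
  apply Tendsto.congr' (f₁ := fun x => x - xstar n k d + 1)
  · filter_upwards [eventually_ge_atTop (xstar n k d)] with x hx
    simp [Phi, if_pos hx]
  · exact tendsto_atTop_add_const_right _ _ (tendsto_atTop_add_const_right _ _ tendsto_id)

lemma tendsto_gfun_atBot : Tendsto (gfun n k d) atBot atTop := by
  have hk0 : (0:ℝ) < 2*k := by positivity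
  have hn0 : (0:ℝ) < n := by positivity
  have h1 : Tendsto (fun x : ℝ => Real.exp (-(2*(k:ℝ)) * x)) atBot atTop := by
    apply Real.tendsto_exp_atTop.comp
    have h0 : Tendsto (fun x : ℝ => -x) atBot atTop := tendsto_neg_atBot_atTop
    have := h0.const_mul_atTop hk0
    apply this.congr
    intro x; ring
  have h2 : Tendsto (fun x : ℝ => cst n k d * Real.exp ((n:ℝ) * x) + 1) atBot (𝓝 1) := by
    have : Tendsto (fun x : ℝ => (n:ℝ) * x) atBot atBot := by
      apply Tendsto.const_mul_atBot hn0 tendsto_id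
    have h3 := (Real.tendsto_exp_atBot.comp this).const_mul (cst n k d)
    simpa using h3.add_const 1
  have := Tendsto.atTop_mul_pos (by norm_num : (0:ℝ) < 1) h1 h2
  apply this.congr
  intro x
  have e1 : Real.exp (-(2*(k:ℝ))*x) * Real.exp ((n:ℝ)*x) = Real.exp (((n:ℝ)-2*(k:ℝ))*x) := by
    rw [← Real.exp_add]; ring_nf
  simp only [gfun]
  linear_combination cst n k d * e1

lemma tendsto_Phi_atBot : Tendsto (Phi n k d) atBot atBot := by
  apply Tendsto.congr' (f₁ := phi n k d)
  · filter_upwards [eventually_lt_atBot (xstar n k d)] with x hx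
    exact (Phi_of_lt hn hk2 hd hx).symm
  · have hk0 : (0:ℝ) < 1/(k:ℝ) := by
      have : (0:ℝ) < k := by positivity
      positivity
    have h1 := (tendsto_rpow_atTop hk0).comp (tendsto_gfun_atBot hn hk2 hd)
    have h2 := tendsto_neg_atTop_atBot.comp h1
    have h3 := tendsto_atBot_add_const_left atBot 1 h2
    apply h3.congr
    intro x
    simp [phi, sub_eq_add_neg, Function.comp]

lemma surjective_Phi : Function.Surjective (Phi n k d) :=
  (continuous_Phi hn hk2 hd).surjective (tendsto_Phi_atTop hn hk2 hd) (tendsto_Phi_atBot hn hk2 hd)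

lemma Phi_X0 (z : ℝ) : Phi n k d (X0 n k d z) = z :=
  Function.rightInverse_invFun (surjective_Phi hn hk2 hd) z

lemma X0_Phi (x : ℝ) : X0 n k d (Phi n k d x) = x :=
  Function.leftInverse_invFun (strictMono_Phi hn hk2 hd).injective x

lemma strictMono_X0 : StrictMono (X0 n k d) := by
  intro a b hab
  have h2 : Phi n k d (X0 n k d a) < Phi n k d (X0 n k d b) := by
    rw [Phi_X0 hn hk2 hd, Phi_X0 hn hk2 hd]; exact hab
  exact (strictMono_Phi hn hk2 hd).lt_iff_lt.1 h2

lemma continuous_X0 : Continuous (X0 n k d) := by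
  let e := StrictMono.orderIsoOfSurjective _ (strictMono_Phi hn hk2 hd) (surjective_Phi hn hk2 hd)
  have : X0 n k d = e.symm := by
    funext z
    apply (strictMono_Phi hn hk2 hd).injective
    rw [Phi_X0 hn hk2 hd]
    exact (StrictMono.orderIsoOfSurjective_self_symm_apply _ _ _ z).symm
  rw [this]
  exact OrderIso.continuous _

lemma X0_one : X0 n k d 1 = xstar n k d := by
  rw [← Phi_xstar hn hk2 hd, X0_Phi hn hk2 hd]

lemma X0_zero : X0 n k d 0 = d := by
  rw [← Phi_d hn hk2 hd, X0_Phi hn hk2 hd]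

lemma X0_lt_xstar {z : ℝ} (hz : z < 1) : X0 n k d z < xstar n k d := by
  rw [← X0_one hn hk2 hd]
  exact strictMono_X0 hn hk2 hd hz

lemma X0_le_xstar {z : ℝ} (hz : z ≤ 1) : X0 n k d z ≤ xstar n k d := by
  rw [← X0_one hn hk2 hd]
  exact (strictMono_X0 hn hk2 hd).monotone hz

lemma phi_X0 {z : ℝ} (hz : z < 1) : phi n k d (X0 n k d z) = z := by
  rw [← Phi_of_lt hn hk2 hd (X0_lt_xstar hn hk2 hd hz), Phi_X0 hn hk2 hd]

lemma d_le_X0 {z : ℝ} (hz : 0 ≤ z) : d ≤ X0 n k d z := by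
  have h := (strictMono_X0 hn hk2 hd).monotone hz
  rwa [X0_zero hn hk2 hd] at h

end chunk3

/-- general helper: smoothness and strict derivative of an inverse function -/
lemma smooth_inv_aux {f Yi : ℝ → ℝ} {a m : ℝ} (hf : ContDiffAt ℝ (⊤:ℕ∞) f a)
    (hf' : HasDerivAt f m a) (hm : m ≠ 0)
    (hright : ∀ᶠ t in 𝓝 (f a), f (Yi t) = t)
    (huniq : ∀ᶠ t in 𝓝 (f a), ∀ x₁ x₂ : ℝ, f x₁ = t → f x₂ = t → x₁ = x₂) :
    ContDiffAt ℝ (⊤:ℕ∞) Yi (f a) ∧ HasStrictDerivAt Yi m⁻¹ (f a) := by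
  have h1le : ((⊤:ℕ∞) : WithTop ℕ∞) ≠ 0 := by simp
  have hs : HasStrictDerivAt f m a := hf.hasStrictDerivAt' hf' h1le
  have hSF : HasStrictFDerivAt f
      (ContinuousLinearEquiv.unitsEquivAut ℝ (Units.mk0 m hm) : ℝ →L[ℝ] ℝ) a :=
    hs.hasStrictFDerivAt_equiv hm
  have hcont : Tendsto f (𝓝 a) (𝓝 (f a)) := hf'.continuousAt
  have hleft : ∀ᶠ x in 𝓝 a, Yi (f x) = x := by
    filter_upwards [hcont.eventually hright, hcont.eventually huniq] with x h1 h2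
    exact h2 _ _ h1 rfl
  have hYeq : ∀ᶠ t in 𝓝 (f a),
      Yi t = hSF.localInverse f _ a t := hSF.localInverse_unique hleft
  constructor
  · have hsm : ContDiffAt ℝ (⊤:ℕ∞) (hf.localInverse (hf'.hasFDerivAt_equiv hm) h1le) (f a) :=
      hf.to_localInverse (hf'.hasFDerivAt_equiv hm) h1le
    exact hsm.congr_of_eventuallyEq hYeq
  · exact hs.to_local_left_inverse hm hleft

end Stmt17

namespace Stmt17

section chunk4
variable {n k : ℕ} {d : ℝ}
variable (hn : 3 ≤ n) (hk2 : 2 ≤ k) (hd : d < 0)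
include hn hk2 hd

lemma X0_reg {z : ℝ} (hz : z < 1) :
    ContDiffAt ℝ (⊤:ℕ∞) (X0 n k d) z ∧
      HasStrictDerivAt (X0 n k d) (phid n k d (X0 n k d z))⁻¹ z := by
  set a := X0 n k d z with hadef
  have ha : a < xstar n k d := X0_lt_xstar hn hk2 hd hz
  have hPhiEq : Phi n k d =ᶠ[𝓝 a] phi n k d :=
    eventually_of_mem (Iio_mem_nhds ha) (fun x hx => Phi_of_lt hn hk2 hd hx)
  have hfc : ContDiffAt ℝ (⊤:ℕ∞) (Phi n k d) a :=
    (contDiffAt_phi hn hk2 hd ha).congr_of_eventuallyEq hPhiEq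
  have hfd : HasDerivAt (Phi n k d) (phid n k d a) a :=
    (hasDerivAt_phi hn hk2 hd ha).congr_of_eventuallyEq hPhiEq
  have hm : phid n k d a ≠ 0 := (phid_pos hn hk2 hd ha).ne'
  have hright : ∀ᶠ t in 𝓝 (Phi n k d a), Phi n k d (X0 n k d t) = t :=
    Eventually.of_forall (Phi_X0 hn hk2 hd)
  have huniq : ∀ᶠ t in 𝓝 (Phi n k d a), ∀ x₁ x₂ : ℝ,
      Phi n k d x₁ = t → Phi n k d x₂ = t → x₁ = x₂ :=
    Eventually.of_forall (fun t x₁ x₂ h1 h2 =>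
      (strictMono_Phi hn hk2 hd).injective (h1.trans h2.symm))
  obtain ⟨h1, h2⟩ := smooth_inv_aux hfc hfd hm hright huniq
  rw [Phi_X0 hn hk2 hd] at h1 h2
  exact ⟨h1, h2⟩

lemma Dfun_pos {x : ℝ} (hx : x ≤ xstar n k d) : 0 < Dfun n k d x := by
  have hk0 : (0:ℝ) < k := by positivity
  have hn0 : (0:ℝ) < n := by positivity
  have hc := cst_neg hn hk2 hd
  have h1 : Real.exp (-(n:ℝ) * xstar n k d) ≤ Real.exp (-(n:ℝ)*x) :=
    Real.exp_le_exp.2 (by nlinarith)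
  rw [exp_xstar hn hk2 hd] at h1
  have h2 : 2*(k:ℝ) * (-(cst n k d)) ≤ 2*(k:ℝ) * Real.exp (-(n:ℝ)*x) :=
    mul_le_mul_of_nonneg_left h1 (by positivity)
  simp only [Dfun]
  nlinarith

lemma sq_lt_one_of_mem {y : ℝ} (hy : y ∈ Ioo (-1:ℝ) 1) : y^2 < 1 := by
  nlinarith [hy.1, hy.2]

lemma gfun_X0_eq {y : ℝ} (hy : y ∈ Ioo (-1:ℝ) 1) :
    gfun n k d (X0 n k d (y^2)) = (1 - y^2)^k := by
  have hy2 : y^2 < 1 := sq_lt_one_of_mem hn hk2 hd hy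
  have h1 : phi n k d (X0 n k d (y^2)) = y^2 := phi_X0 hn hk2 hd hy2
  have hgpos : 0 < gfun n k d (X0 n k d (y^2)) :=
    gfun_pos hn hk2 hd (X0_lt_xstar hn hk2 hd hy2)
  have hk0 : k ≠ 0 := by omega
  have h2 : (gfun n k d (X0 n k d (y^2))) ^ ((1:ℝ)/k) = 1 - y^2 := by
    simp only [phi] at h1; linarith
  have h3 := Real.rpow_inv_natCast_pow hgpos.le hk0
  rw [← h3, ← h2]
  norm_num

lemma neg_gd_eq {x : ℝ} :
    -gd n k d x = Real.exp (((n:ℝ) - 2*k) * x) * Dfun n k d x := by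
  have e1 : Real.exp (((n:ℝ)-2*(k:ℝ))*x) * Real.exp (-(n:ℝ)*x) = Real.exp (-(2*(k:ℝ))*x) := by
    rw [← Real.exp_add]; ring_nf
  simp only [gd, Dfun]
  linear_combination (-(2*(k:ℝ))) * e1

lemma key_ident {y : ℝ} (hy : y ∈ Ioo (-1:ℝ) 1) :
    phid n k d (X0 n k d (y^2)) * Gfun n k d y = 2 := by
  have hk0 : (0:ℝ) < k := by positivity
  have hy2 : y^2 < 1 := sq_lt_one_of_mem hn hk2 hd hy
  have ha : (0:ℝ) < 1 - y^2 := by linarith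
  set x := X0 n k d (y^2) with hxdef
  have hxlt : x < xstar n k d := X0_lt_xstar hn hk2 hd hy2
  have hg : gfun n k d x = (1-y^2)^k := gfun_X0_eq hn hk2 hd hy
  have hD : 0 < Dfun n k d x := Dfun_pos hn hk2 hd hxlt.le
  have hrp : (gfun n k d x) ^ ((1:ℝ)/k - 1) = (1-y^2) ^ ((1:ℝ) - k) := by
    rw [hg, ← Real.rpow_natCast (1-y^2) k, ← Real.rpow_mul ha.le]
    congr 1
    field_simp
  have hnp : ((1-y^2)) ^ ((k:ℕ)-1) = (1-y^2) ^ ((k:ℝ) - 1) := by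
    rw [← Real.rpow_natCast (1-y^2) (k-1)]
    congr 1
    rw [Nat.cast_sub (by omega : 1 ≤ k)]
    norm_num
  have hsum : (1-y^2) ^ ((1:ℝ) - k) * (1-y^2) ^ ((k:ℝ) - 1) = 1 := by
    rw [← Real.rpow_add ha]; norm_num
  have hexp : Real.exp (((n:ℝ)-2*k)*x) * Real.exp ((2*(k:ℝ)-n)*x) = 1 := by
    rw [← Real.exp_add]
    have h0 : ((n:ℝ)-2*k)*x + (2*(k:ℝ)-n)*x = 0 := by ring
    rw [h0, Real.exp_zero]
  have hphid : phid n k d x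
      = (1/(k:ℝ)) * (1-y^2)^((1:ℝ)-k) * (Real.exp (((n:ℝ)-2*k)*x) * Dfun n k d x) := by
    simp only [phid]
    rw [hrp, ← neg_gd_eq (hn := hn) (hk2 := hk2) (hd := hd)]
    ring
  simp only [Gfun, ← hxdef]
  rw [hphid, hnp]
  field_simp
  have hexp' : Real.exp (((n:ℝ) - k*2)*x) * Real.exp (x*(k*2 - n)) = 1 := by
    rw [← Real.exp_add, ← Real.exp_zero]; congr 1; ring
  linear_combination (Real.exp (((n:ℝ) - k*2)*x) * Real.exp (x*(k*2 - n))) * hsum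
    + hexp'

end chunk4

end Stmt17

namespace Stmt17

section chunk5
variable {n k : ℕ} {d : ℝ}
variable (hn : 3 ≤ n) (hk2 : 2 ≤ k) (hd : d < 0)

def clamp (y : ℝ) : ℝ := max (-1) (min 1 y)

lemma clamp_mem (y : ℝ) : clamp y ∈ Icc (-1:ℝ) 1 := by
  constructor
  · exact le_max_left _ _
  · simp only [clamp, max_le_iff]
    constructor <;> [norm_num; exact min_le_left _ _]

lemma clamp_eq {y : ℝ} (hy : y ∈ Icc (-1:ℝ) 1) : clamp y = y := by
  simp only [clamp, max_def, min_def]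
  split_ifs <;> linarith [hy.1, hy.2]

lemma clamp_neg (y : ℝ) : clamp (-y) = -clamp y := by
  simp only [clamp, max_def, min_def]
  split_ifs <;> linarith

lemma continuous_clamp : Continuous clamp :=
  continuous_const.max (continuous_const.min continuous_id)

lemma clamp_of_ge {y : ℝ} (hy : 1 ≤ y) : clamp y = 1 := by
  simp only [clamp, max_def, min_def]
  split_ifs <;> linarith

include hn hk2 hd

lemma Gc_def' (y : ℝ) : Gc n k d y = Gfun n k d (clamp y) := rfl

lemma Gfun_even (y : ℝ) : Gfun n k d (-y) = Gfun n k d y := by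
  simp [Gfun, neg_sq]

lemma Gfun_pos {y : ℝ} (hy : y ∈ Ioo (-1:ℝ) 1) : 0 < Gfun n k d y := by
  have hy2 : y^2 < 1 := sq_lt_one_of_mem hn hk2 hd hy
  have hD : 0 < Dfun n k d (X0 n k d (y^2)) :=
    Dfun_pos hn hk2 hd (X0_lt_xstar hn hk2 hd hy2).le
  have h1 : (0:ℝ) < 1 - y^2 := by linarith
  have hk0 : (0:ℝ) < k := by positivity
  apply div_pos _ hD
  positivity

lemma Gfun_one : Gfun n k d 1 = 0 := by
  have : k - 1 ≠ 0 := by omega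
  simp [Gfun, this]

lemma continuousAt_Gfun {y : ℝ} (hy : y^2 ≤ 1) : ContinuousAt (Gfun n k d) y := by
  have hD : 0 < Dfun n k d (X0 n k d (y^2)) :=
    Dfun_pos hn hk2 hd (X0_le_xstar hn hk2 hd hy)
  have hX : Continuous (fun y : ℝ => X0 n k d (y^2)) :=
    (continuous_X0 hn hk2 hd).comp (continuous_pow 2)
  have hden : Continuous (fun y : ℝ => Dfun n k d (X0 n k d (y^2))) := by
    apply Continuous.add continuous_const
    exact continuous_const.mul (Real.continuous_exp.comp (continuous_const.mul hX))
  have hnum : Continuous (fun y : ℝ =>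
      2*(k:ℝ) * Real.exp ((2*(k:ℝ) - n) * X0 n k d (y^2)) * (1 - y^2)^(k-1)) := by
    apply Continuous.mul
    · exact continuous_const.mul (Real.continuous_exp.comp (continuous_const.mul hX))
    · exact (continuous_const.sub (continuous_pow 2)).pow (k-1)
  exact (hnum.continuousAt).div (hden.continuousAt) hD.ne'

lemma continuous_Gc : Continuous (Gc n k d) := by
  rw [continuous_iff_continuousAt]
  intro y
  have h1 : (clamp y)^2 ≤ 1 := by
    have := clamp_mem y
    nlinarith [this.1, this.2]
  exact (continuousAt_Gfun hn hk2 hd h1).comp continuous_clamp.continuousAt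

lemma Gc_even (y : ℝ) : Gc n k d (-y) = Gc n k d y := by
  rw [Gc_def' hn hk2 hd, Gc_def' hn hk2 hd, clamp_neg, Gfun_even hn hk2 hd]

lemma Gc_of_mem {y : ℝ} (hy : y ∈ Icc (-1:ℝ) 1) : Gc n k d y = Gfun n k d y := by
  rw [Gc_def' hn hk2 hd, clamp_eq hy]

lemma Gc_zero_of_ge {y : ℝ} (hy : 1 ≤ y) : Gc n k d y = 0 := by
  rw [Gc_def' hn hk2 hd, clamp_of_ge hy, Gfun_one hn hk2 hd]

lemma hasStrictDerivAt_tau (y : ℝ) : HasStrictDerivAt (tau n k d) (Gc n k d y) y := by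
  apply intervalIntegral.integral_hasStrictDerivAt_right
    ((continuous_Gc hn hk2 hd).intervalIntegrable _ _)
    ((continuous_Gc hn hk2 hd).stronglyMeasurableAtFilter _ _)
    (continuous_Gc hn hk2 hd).continuousAt

lemma tau_zero : tau n k d 0 = 0 := intervalIntegral.integral_same

lemma tau_odd (y : ℝ) : tau n k d (-y) = -tau n k d y := by
  have h1 : ∫ x in (0:ℝ)..y, Gc n k d (-x) = ∫ x in (-y)..(0:ℝ), Gc n k d x := by
    simpa using intervalIntegral.integral_comp_neg (a := (0:ℝ)) (b := y) (fun x => Gc n k d x)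
  have h2 : (fun x => Gc n k d (-x)) = fun x => Gc n k d x :=
    funext (fun x => Gc_even hn hk2 hd x)
  rw [h2] at h1
  have h3 : tau n k d y = -(tau n k d (-y)) := by
    rw [tau, h1, intervalIntegral.integral_symm]
    rfl
  linarith

lemma continuous_tau : Continuous (tau n k d) :=
  continuous_iff_continuousAt.2 fun y =>
    (hasStrictDerivAt_tau hn hk2 hd y).hasDerivAt.continuousAt

lemma strictMonoOn_tau : StrictMonoOn (tau n k d) (Icc (-1) 1) := by
  apply strictMonoOn_of_deriv_pos (convex_Icc _ _) (continuous_tau hn hk2 hd).continuousOn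
  intro x hx
  rw [interior_Icc] at hx
  rw [(hasStrictDerivAt_tau hn hk2 hd x).hasDerivAt.deriv,
    Gc_of_mem hn hk2 hd (Ioo_subset_Icc_self hx)]
  exact Gfun_pos hn hk2 hd hx

lemma Tmax_pos : 0 < Tmax n k d := by
  have h := strictMonoOn_tau hn hk2 hd (show (0:ℝ) ∈ Icc (-1:ℝ) 1 by norm_num)
    (show (1:ℝ) ∈ Icc (-1:ℝ) 1 by norm_num) (by norm_num)
  rw [tau_zero hn hk2 hd] at h
  exact h

lemma tau_of_ge {y : ℝ} (hy : 1 ≤ y) : tau n k d y = Tmax n k d := by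
  have hint : ∀ a b : ℝ, IntervalIntegrable (Gc n k d) MeasureTheory.volume a b :=
    fun a b => (continuous_Gc hn hk2 hd).intervalIntegrable _ _
  have h1 : tau n k d 1 + ∫ x in (1:ℝ)..y, Gc n k d x = tau n k d y :=
    intervalIntegral.integral_add_adjacent_intervals (hint 0 1) (hint 1 y)
  have h2 : ∫ x in (1:ℝ)..y, Gc n k d x = 0 := by
    rw [intervalIntegral.integral_congr (g := fun _ => (0:ℝ))
      (fun x hx => by
        apply Gc_zero_of_ge hn hk2 hd
        rw [uIcc_of_le hy] at hx
        exact hx.1)]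
    simp
  rw [h2] at h1
  simpa [Tmax] using h1.symm

lemma tau_of_le {y : ℝ} (hy : y ≤ -1) : tau n k d y = -Tmax n k d := by
  have h1 : tau n k d (-y) = Tmax n k d := tau_of_ge hn hk2 hd (by linarith)
  have h2 := tau_odd hn hk2 hd (-y)
  rw [neg_neg] at h2
  rw [h2] at *
  linarith

lemma tau_neg_one : tau n k d (-1) = -Tmax n k d := tau_of_le hn hk2 hd le_rfl

lemma mem_of_tau_eq {x t : ℝ} (ht : t ∈ Ioo (-Tmax n k d) (Tmax n k d))
    (hx : tau n k d x = t) : x ∈ Ioo (-1:ℝ) 1 := by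
  constructor
  · by_contra h
    rw [tau_of_le hn hk2 hd (by linarith)] at hx
    have := ht.1; linarith
  · by_contra h
    rw [tau_of_ge hn hk2 hd (by linarith)] at hx
    have := ht.2; linarith

lemma exists_tau_eq {t : ℝ} (ht : t ∈ Ioo (-Tmax n k d) (Tmax n k d)) :
    ∃ y ∈ Ioo (-1:ℝ) 1, tau n k d y = t := by
  have h1 : Ioo (tau n k d (-1)) (tau n k d 1) ⊆ tau n k d '' Ioo (-1) 1 :=
    intermediate_value_Ioo (by norm_num) (continuous_tau hn hk2 hd).continuousOn
  have h2 : t ∈ Ioo (tau n k d (-1)) (tau n k d 1) := by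
    rw [tau_neg_one hn hk2 hd]
    show t ∈ Ioo _ (tau n k d 1)
    rw [show tau n k d 1 = Tmax n k d from rfl]
    exact ht
  obtain ⟨y, hy, hyt⟩ := h1 h2
  exact ⟨y, hy, hyt⟩

lemma tau_Yfun {t : ℝ} (ht : t ∈ Ioo (-Tmax n k d) (Tmax n k d)) :
    tau n k d (Yfun n k d t) = t := by
  obtain ⟨y, _, hyt⟩ := exists_tau_eq hn hk2 hd ht
  exact Function.invFun_eq ⟨y, hyt⟩

lemma Yfun_mem {t : ℝ} (ht : t ∈ Ioo (-Tmax n k d) (Tmax n k d)) :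
    Yfun n k d t ∈ Ioo (-1:ℝ) 1 :=
  mem_of_tau_eq hn hk2 hd ht (tau_Yfun hn hk2 hd ht)

lemma Yfun_unique {t x : ℝ} (ht : t ∈ Ioo (-Tmax n k d) (Tmax n k d))
    (hx : tau n k d x = t) : x = Yfun n k d t := by
  have h1 := mem_of_tau_eq hn hk2 hd ht hx
  have h2 := Yfun_mem hn hk2 hd ht
  exact strictMonoOn_tau hn hk2 hd |>.injOn (Ioo_subset_Icc_self h1)
    (Ioo_subset_Icc_self h2) (by rw [hx, tau_Yfun hn hk2 hd ht])

lemma Yfun_zero : Yfun n k d 0 = 0 := by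
  have h0 : (0:ℝ) ∈ Ioo (-Tmax n k d) (Tmax n k d) := by
    have := Tmax_pos hn hk2 hd
    constructor <;> linarith
  exact (Yfun_unique hn hk2 hd h0 (tau_zero hn hk2 hd)).symm

end chunk5

end Stmt17

namespace Stmt17

section chunk6
variable {n k : ℕ} {d : ℝ}
variable (hn : 3 ≤ n) (hk2 : 2 ≤ k) (hd : d < 0)
include hn hk2 hd

lemma contDiffAt_Gfun {y : ℝ} (hy : y ∈ Ioo (-1:ℝ) 1) :
    ContDiffAt ℝ (⊤:ℕ∞) (Gfun n k d) y := by
  have hy2 : y^2 < 1 := sq_lt_one_of_mem hn hk2 hd hy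
  have hD : 0 < Dfun n k d (X0 n k d (y^2)) :=
    Dfun_pos hn hk2 hd (X0_lt_xstar hn hk2 hd hy2).le
  have hsq : ContDiffAt ℝ (⊤:ℕ∞) (fun y : ℝ => y^2) y := (contDiff_id.pow 2).contDiffAt
  have hX : ContDiffAt ℝ (⊤:ℕ∞) (fun y : ℝ => X0 n k d (y^2)) y :=
    ContDiffAt.comp (g := X0 n k d) (f := fun w : ℝ => w^2) y ((X0_reg hn hk2 hd hy2).1) hsq
  have hden : ContDiffAt ℝ (⊤:ℕ∞) (fun y : ℝ => Dfun n k d (X0 n k d (y^2))) y := by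
    apply ContDiffAt.add contDiffAt_const
    exact contDiffAt_const.mul ((contDiffAt_const.mul hX).exp)
  have hnum : ContDiffAt ℝ (⊤:ℕ∞) (fun y : ℝ =>
      2*(k:ℝ) * Real.exp ((2*(k:ℝ) - n) * X0 n k d (y^2)) * (1 - y^2)^(k-1)) y := by
    apply ContDiffAt.mul
    · exact contDiffAt_const.mul ((contDiffAt_const.mul hX).exp)
    · exact (contDiffAt_const.sub hsq).pow (k-1)
  exact hnum.div hden hD.ne'

lemma contDiffOn_tau : ContDiffOn ℝ (⊤:ℕ∞) (tau n k d) (Ioo (-1:ℝ) 1) := by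
  rw [contDiffOn_infty_iff_deriv_of_isOpen isOpen_Ioo]
  constructor
  · intro y _
    exact ((hasStrictDerivAt_tau hn hk2 hd y).hasDerivAt.differentiableAt).differentiableWithinAt
  · have hderiv : ∀ y : ℝ, deriv (tau n k d) y = Gc n k d y :=
    fun y => (hasStrictDerivAt_tau hn hk2 hd y).hasDerivAt.deriv
    apply ContDiffOn.congr (f := Gc n k d) _ (fun y _ => hderiv y)
    intro y hy
    apply ContDiffAt.contDiffWithinAt
    apply (contDiffAt_Gfun hn hk2 hd hy).congr_of_eventuallyEq
    exact eventually_of_mem (Ioo_mem_nhds hy.1 hy.2) (fun x hx => Gc_of_mem hn hk2 hd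
      (Ioo_subset_Icc_self hx))

lemma Yfun_reg {t : ℝ} (ht : t ∈ Ioo (-Tmax n k d) (Tmax n k d)) :
    ContDiffAt ℝ (⊤:ℕ∞) (Yfun n k d) t ∧
      HasStrictDerivAt (Yfun n k d) (Gfun n k d (Yfun n k d t))⁻¹ t := by
  set y₀ := Yfun n k d t with hy0
  have hy : y₀ ∈ Ioo (-1:ℝ) 1 := Yfun_mem hn hk2 hd ht
  have hf : ContDiffAt ℝ (⊤:ℕ∞) (tau n k d) y₀ :=
    (contDiffOn_tau hn hk2 hd).contDiffAt (Ioo_mem_nhds hy.1 hy.2)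
  have hf' : HasDerivAt (tau n k d) (Gfun n k d y₀) y₀ := by
    have := (hasStrictDerivAt_tau hn hk2 hd y₀).hasDerivAt
    rwa [Gc_of_mem hn hk2 hd (Ioo_subset_Icc_self hy)] at this
  have hm : Gfun n k d y₀ ≠ 0 := (Gfun_pos hn hk2 hd hy).ne'
  have htt : tau n k d y₀ = t := tau_Yfun hn hk2 hd ht
  have hmem : ∀ᶠ s in 𝓝 (tau n k d y₀), s ∈ Ioo (-Tmax n k d) (Tmax n k d) := by
    rw [htt]
    exact eventually_of_mem (Ioo_mem_nhds ht.1 ht.2) (fun s hs => hs)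
  have hright : ∀ᶠ s in 𝓝 (tau n k d y₀), tau n k d (Yfun n k d s) = s := by
    filter_upwards [hmem] with s hs
    exact tau_Yfun hn hk2 hd hs
  have huniq : ∀ᶠ s in 𝓝 (tau n k d y₀), ∀ x₁ x₂ : ℝ,
      tau n k d x₁ = s → tau n k d x₂ = s → x₁ = x₂ := by
    filter_upwards [hmem] with s hs x₁ x₂ h1 h2
    rw [Yfun_unique hn hk2 hd hs h1, Yfun_unique hn hk2 hd hs h2]
  obtain ⟨h1, h2⟩ := smooth_inv_aux hf hf' hm hright huniq
  rw [htt] at h1 h2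
  exact ⟨h1, h2⟩

lemma ufun_reg {t : ℝ} (ht : t ∈ Ioo (-Tmax n k d) (Tmax n k d)) :
    ContDiffAt ℝ (⊤:ℕ∞) (ufun n k d) t ∧
      HasStrictDerivAt (ufun n k d) (Yfun n k d t) t := by
  set y := Yfun n k d t with hydef
  have hy : y ∈ Ioo (-1:ℝ) 1 := Yfun_mem hn hk2 hd ht
  have hy2 : y^2 < 1 := sq_lt_one_of_mem hn hk2 hd hy
  obtain ⟨hYc, hYd⟩ := Yfun_reg hn hk2 hd ht
  obtain ⟨hXc, hXd⟩ := X0_reg hn hk2 hd hy2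
  have hsqd : HasStrictDerivAt (fun w : ℝ => w^2) (2*y) y := by
    simpa using hasStrictDerivAt_pow 2 y
  have hcomp1 : HasStrictDerivAt (fun w : ℝ => X0 n k d (w^2))
      ((phid n k d (X0 n k d (y^2)))⁻¹ * (2*y)) y :=
    HasStrictDerivAt.comp (h₂ := X0 n k d) (h := fun w : ℝ => w^2) y hXd hsqd
  have hcomp2 : HasStrictDerivAt (ufun n k d)
      ((phid n k d (X0 n k d (y^2)))⁻¹ * (2*y) * (Gfun n k d y)⁻¹) t :=
    HasStrictDerivAt.comp (h₂ := fun w : ℝ => X0 n k d (w^2)) (h := Yfun n k d) t hcomp1 hYd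
  constructor
  · have hsq : ContDiffAt ℝ (⊤:ℕ∞) (fun w : ℝ => w^2) y := (contDiff_id.pow 2).contDiffAt
    exact ContDiffAt.comp (g := X0 n k d ∘ fun w : ℝ => w^2) (f := Yfun n k d) t
      (ContDiffAt.comp (g := X0 n k d) (f := fun w : ℝ => w^2) y hXc hsq) hYc
  · have hkey := key_ident hn hk2 hd hy
    have hphid : phid n k d (X0 n k d (y^2)) ≠ 0 :=
      (phid_pos hn hk2 hd (X0_lt_xstar hn hk2 hd hy2)).ne'
    have hG : Gfun n k d y ≠ 0 := (Gfun_pos hn hk2 hd hy).ne'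
    have heq : (phid n k d (X0 n k d (y^2)))⁻¹ * (2*y) * (Gfun n k d y)⁻¹ = y := by
      field_simp
      linear_combination (-y) * hkey
    rw [heq] at hcomp2
    exact hcomp2

lemma deriv_ufun {t : ℝ} (ht : t ∈ Ioo (-Tmax n k d) (Tmax n k d)) :
    deriv (ufun n k d) t = Yfun n k d t :=
  (ufun_reg hn hk2 hd ht).2.hasDerivAt.deriv

lemma deriv_deriv_ufun {t : ℝ} (ht : t ∈ Ioo (-Tmax n k d) (Tmax n k d)) :
    deriv (deriv (ufun n k d)) t = (Gfun n k d (Yfun n k d t))⁻¹ := by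
  have hev : deriv (ufun n k d) =ᶠ[𝓝 t] Yfun n k d :=
    eventually_of_mem (Ioo_mem_nhds ht.1 ht.2) (fun s hs => deriv_ufun hn hk2 hd hs)
  rw [hev.deriv_eq]
  exact (Yfun_reg hn hk2 hd ht).2.hasDerivAt.deriv

end chunk6

end Stmt17

namespace Stmt17

section chunk7
variable {n k : ℕ} {d : ℝ}
variable (hn : 3 ≤ n) (hk2 : 2 ≤ k) (hd : d < 0)
include hn hk2 hd

lemma ode_ident {y : ℝ} (hy : y ∈ Ioo (-1:ℝ) 1) :
    (1 - y^2)^(k-1) * ((Gfun n k d y)⁻¹ + (((n:ℝ) - 2*k)/(2*k)) * (1 - y^2)) =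
      ((n:ℝ)/(2*k)) * Real.exp (-(2*(k:ℝ)) * X0 n k d (y^2)) := by
  have hk0 : (0:ℝ) < k := by positivity
  have hy2 : y^2 < 1 := sq_lt_one_of_mem hn hk2 hd hy
  have ha : (0:ℝ) < 1 - y^2 := by linarith
  set x := X0 n k d (y^2) with hxdef
  have hg : gfun n k d x = (1-y^2)^k := gfun_X0_eq hn hk2 hd hy
  have hD : 0 < Dfun n k d x := Dfun_pos hn hk2 hd (X0_lt_xstar hn hk2 hd hy2).le
  have hpow : (1-y^2)^(k-1) * (1-y^2) = (1-y^2)^k := by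
    rw [← pow_succ]
    congr 1
    omega
  have hexp2 : Real.exp ((2*(k:ℝ)-n)*x) * Real.exp (((n:ℝ)-2*k)*x) = 1 := by
    rw [← Real.exp_add]
    have h0 : (2*(k:ℝ)-n)*x + ((n:ℝ)-2*k)*x = 0 := by ring
    rw [h0, Real.exp_zero]
  have hE : Real.exp (-(n:ℝ)*x) * Real.exp (((n:ℝ)-2*k)*x) = Real.exp (-(2*(k:ℝ))*x) := by
    rw [← Real.exp_add]
    congr 1
    ring
  have hGpos := Gfun_pos hn hk2 hd hy
  have h1 : (1-y^2)^(k-1) * (Gfun n k d y)⁻¹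
      = Dfun n k d x * Real.exp (((n:ℝ)-2*k)*x) / (2*(k:ℝ)) := by
    have hpk : (0:ℝ) < (1-y^2)^(k-1) := by positivity
    have hek : (0:ℝ) < Real.exp ((2*(k:ℝ)-n)*x) := Real.exp_pos _
    simp only [Gfun, ← hxdef, inv_div]
    field_simp
    ring_nf at hexp2 ⊢
    linear_combination (-1:ℝ) * hexp2
  have hgoal : (1 - y^2)^(k-1) * ((Gfun n k d y)⁻¹ + (((n:ℝ) - 2*k)/(2*k)) * (1 - y^2))
      = (1-y^2)^(k-1) * (Gfun n k d y)⁻¹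
        + (((n:ℝ) - 2*k)/(2*k)) * ((1-y^2)^(k-1) * (1-y^2)) := by ring
  rw [hgoal, h1, hpow, ← hg]
  simp only [gfun, Dfun]
  field_simp
  ring_nf at hE ⊢
  linear_combination (2*(k:ℝ)) * hE

lemma Hfun_d_zero : Hfun n k d 0 = cst n k d := by
  simp [Hfun, cst]

lemma Hfun_orbit {y : ℝ} (hy : y ∈ Ioo (-1:ℝ) 1) :
    Hfun n k (X0 n k d (y^2)) y = cst n k d := by
  set x := X0 n k d (y^2) with hxdef
  have hg : gfun n k d x = (1-y^2)^k := gfun_X0_eq hn hk2 hd hy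
  have e1 : Real.exp ((2*(k:ℝ)-n)*x) * Real.exp (((n:ℝ)-2*k)*x) = 1 := by
    rw [← Real.exp_add]
    have h0 : (2*(k:ℝ)-n)*x + ((n:ℝ)-2*k)*x = 0 := by ring
    rw [h0, Real.exp_zero]
  have e2 : Real.exp ((2*(k:ℝ)-n)*x) * Real.exp (-(2*(k:ℝ))*x) = Real.exp (-(n:ℝ)*x) := by
    rw [← Real.exp_add]
    congr 1
    ring
  have hh : Hfun n k x y = Real.exp ((2*(k:ℝ)-n)*x) * (1 - y^2)^k - Real.exp (-(n:ℝ)*x) := by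
    norm_num [Hfun]
  rw [hh, ← hg]
  simp only [gfun]
  linear_combination cst n k d * e1 + e2

lemma tendsto_Y_top : Tendsto (Yfun n k d) (𝓝[<] (Tmax n k d)) (𝓝 1) := by
  have hT := Tmax_pos hn hk2 hd
  apply tendsto_order.2
  constructor
  · intro a ha
    set b := max a 0 with hbdef
    have hb0 : 0 ≤ b := le_max_right _ _
    have hb1 : b < 1 := max_lt ha (by norm_num)
    have hbI : b ∈ Icc (-1:ℝ) 1 := ⟨by linarith, hb1.le⟩
    have htb : tau n k d b < Tmax n k d :=
      strictMonoOn_tau hn hk2 hd hbI (by norm_num : (1:ℝ) ∈ Icc (-1:ℝ) 1) hb1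
    have htb0 : 0 ≤ tau n k d b := by
      have := strictMonoOn_tau hn hk2 hd |>.monotoneOn
        (by norm_num : (0:ℝ) ∈ Icc (-1:ℝ) 1) hbI hb0
      rwa [tau_zero hn hk2 hd] at this
    filter_upwards [Ioo_mem_nhdsLT_of_mem (⟨htb, le_rfl⟩ : Tmax n k d ∈ Ioc (tau n k d b) (Tmax n k d))]
      with t ht
    have htI : t ∈ Ioo (-Tmax n k d) (Tmax n k d) := ⟨by linarith [ht.1], ht.2⟩
    have hyI := Yfun_mem hn hk2 hd htI
    have : b < Yfun n k d t := by
      by_contra hcon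
      push_neg at hcon
      have := strictMonoOn_tau hn hk2 hd |>.monotoneOn
        (Ioo_subset_Icc_self hyI) hbI hcon
      rw [tau_Yfun hn hk2 hd htI] at this
      linarith [ht.1]
    calc a ≤ b := le_max_left _ _
    _ < _ := this
  · intro a ha
    filter_upwards [Ioo_mem_nhdsLT_of_mem
      (⟨by linarith, le_rfl⟩ : Tmax n k d ∈ Ioc (-Tmax n k d) (Tmax n k d))] with t ht
    exact lt_trans (Yfun_mem hn hk2 hd ht).2 ha

lemma tendsto_Y_bot : Tendsto (Yfun n k d) (𝓝[>] (-(Tmax n k d))) (𝓝 (-1)) := by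
  have hT := Tmax_pos hn hk2 hd
  apply tendsto_order.2
  constructor
  · intro a ha
    filter_upwards [Ioo_mem_nhdsGT_of_mem
      (⟨le_rfl, by linarith⟩ : -Tmax n k d ∈ Ico (-Tmax n k d) (Tmax n k d))] with t ht
    exact lt_trans ha (Yfun_mem hn hk2 hd ht).1
  · intro a ha
    set b := min a 0 with hbdef
    have hb0 : b ≤ 0 := min_le_right _ _
    have hb1 : -1 < b := lt_min ha (by norm_num)
    have hbI : b ∈ Icc (-1:ℝ) 1 := ⟨hb1.le, by linarith⟩
    have htb : -Tmax n k d < tau n k d b := by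
      have := strictMonoOn_tau hn hk2 hd (by norm_num : (-1:ℝ) ∈ Icc (-1:ℝ) 1) hbI hb1
      rwa [tau_neg_one hn hk2 hd] at this
    have htb0 : tau n k d b ≤ 0 := by
      have := strictMonoOn_tau hn hk2 hd |>.monotoneOn hbI
        (by norm_num : (0:ℝ) ∈ Icc (-1:ℝ) 1) hb0
      rwa [tau_zero hn hk2 hd] at this
    filter_upwards [Ioo_mem_nhdsGT_of_mem
      (⟨le_rfl, htb⟩ : -Tmax n k d ∈ Ico (-Tmax n k d) (tau n k d b))] with t ht
    have htI : t ∈ Ioo (-Tmax n k d) (Tmax n k d) := ⟨ht.1, by linarith [ht.2]⟩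
    have hyI := Yfun_mem hn hk2 hd htI
    have : Yfun n k d t < b := by
      by_contra hcon
      push_neg at hcon
      have := strictMonoOn_tau hn hk2 hd |>.monotoneOn hbI
        (Ioo_subset_Icc_self hyI) hcon
      rw [tau_Yfun hn hk2 hd htI] at this
      linarith [ht.2]
    calc Yfun n k d t < b := this
    _ ≤ a := min_le_left _ _

lemma tendsto_u_top :
    Tendsto (ufun n k d) (𝓝[<] (Tmax n k d)) (𝓝 (xstar n k d)) := by
  have h1 := tendsto_Y_top hn hk2 hd
  have h2 : Tendsto (fun t => (Yfun n k d t)^2) (𝓝[<] (Tmax n k d)) (𝓝 1) := by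
    have := ((continuous_pow 2).tendsto (1:ℝ)).comp h1
    simpa [Function.comp_def] using this
  have h3 := ((continuous_X0 hn hk2 hd).tendsto (1:ℝ)).comp h2
  rw [X0_one hn hk2 hd] at h3
  exact h3

lemma tendsto_u_bot :
    Tendsto (ufun n k d) (𝓝[>] (-(Tmax n k d))) (𝓝 (xstar n k d)) := by
  have h1 := tendsto_Y_bot hn hk2 hd
  have h2 : Tendsto (fun t => (Yfun n k d t)^2) (𝓝[>] (-(Tmax n k d))) (𝓝 1) := by
    have := ((continuous_pow 2).tendsto (-1:ℝ)).comp h1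
    simpa [Function.comp_def] using this
  have h3 := ((continuous_X0 hn hk2 hd).tendsto (1:ℝ)).comp h2
  rw [X0_one hn hk2 hd] at h3
  exact h3

lemma eventually_Ioo_top :
    ∀ᶠ t in 𝓝[<] (Tmax n k d), t ∈ Ioo (-Tmax n k d) (Tmax n k d) := by
  have hT := Tmax_pos hn hk2 hd
  exact Ioo_mem_nhdsLT_of_mem (⟨by linarith, le_rfl⟩ :
    Tmax n k d ∈ Ioc (-Tmax n k d) (Tmax n k d))

lemma eventually_Ioo_bot :
    ∀ᶠ t in 𝓝[>] (-(Tmax n k d)), t ∈ Ioo (-Tmax n k d) (Tmax n k d) := by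
  have hT := Tmax_pos hn hk2 hd
  exact Ioo_mem_nhdsGT_of_mem (⟨le_rfl, by linarith⟩ :
    -Tmax n k d ∈ Ico (-Tmax n k d) (Tmax n k d))

lemma tendsto_deriv_u_top :
    Tendsto (deriv (ufun n k d)) (𝓝[<] (Tmax n k d)) (𝓝 1) := by
  apply Tendsto.congr' _ (tendsto_Y_top hn hk2 hd)
  filter_upwards [eventually_Ioo_top hn hk2 hd] with t ht
  exact (deriv_ufun hn hk2 hd ht).symm

lemma tendsto_deriv_u_bot :
    Tendsto (deriv (ufun n k d)) (𝓝[>] (-(Tmax n k d))) (𝓝 (-1)) := by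
  apply Tendsto.congr' _ (tendsto_Y_bot hn hk2 hd)
  filter_upwards [eventually_Ioo_bot hn hk2 hd] with t ht
  exact (deriv_ufun hn hk2 hd ht).symm

lemma tendsto_GY_top :
    Tendsto (fun t => Gfun n k d (Yfun n k d t)) (𝓝[<] (Tmax n k d)) (𝓝[>] 0) := by
  rw [tendsto_nhdsWithin_iff]
  constructor
  · have h1 := (continuousAt_Gfun hn hk2 hd (by norm_num : (1:ℝ)^2 ≤ 1)).tendsto.comp
      (tendsto_Y_top hn hk2 hd)
    rwa [Gfun_one hn hk2 hd] at h1
  · filter_upwards [eventually_Ioo_top hn hk2 hd] with t ht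
    exact Gfun_pos hn hk2 hd (Yfun_mem hn hk2 hd ht)

lemma tendsto_GY_bot :
    Tendsto (fun t => Gfun n k d (Yfun n k d t)) (𝓝[>] (-(Tmax n k d))) (𝓝[>] 0) := by
  rw [tendsto_nhdsWithin_iff]
  constructor
  · have h1 := (continuousAt_Gfun hn hk2 hd
      (by norm_num : (-1:ℝ)^2 ≤ 1)).tendsto.comp (tendsto_Y_bot hn hk2 hd)
    rw [Gfun_even hn hk2 hd 1, Gfun_one hn hk2 hd] at h1
    exact h1
  · filter_upwards [eventually_Ioo_bot hn hk2 hd] with t ht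
    exact Gfun_pos hn hk2 hd (Yfun_mem hn hk2 hd ht)

lemma tendsto_dd_u_top :
    Tendsto (deriv (deriv (ufun n k d))) (𝓝[<] (Tmax n k d)) atTop := by
  apply Tendsto.congr' _ (tendsto_inv_nhdsGT_zero.comp (tendsto_GY_top hn hk2 hd))
  filter_upwards [eventually_Ioo_top hn hk2 hd] with t ht
  exact (deriv_deriv_ufun hn hk2 hd ht).symm

lemma tendsto_dd_u_bot :
    Tendsto (deriv (deriv (ufun n k d))) (𝓝[>] (-(Tmax n k d))) atTop := by
  apply Tendsto.congr' _ (tendsto_inv_nhdsGT_zero.comp (tendsto_GY_bot hn hk2 hd))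
  filter_upwards [eventually_Ioo_bot hn hk2 hd] with t ht
  exact (deriv_deriv_ufun hn hk2 hd ht).symm

end chunk7

end Stmt17


open Stmt17 in
/-- For every d < 0 there exist T_d ∈ (0,∞) and a smooth solution u_d on
(−T_d, T_d) of the ODE with u_d(0) = d, u_d'(0) = 0, satisfying 1 − u_d'² > 0, the first
integral H(u_d, u_d') ≡ H(d,0) < 0, and the stated boundary behaviour as t → ±T_d. -/
theorem existence_maximal_solution
    {n k : ℕ} (hn : 3 ≤ n) (hk2 : 2 ≤ k) (hkn : k ≤ n) :
    ∀ d : ℝ, d < 0 →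
      ∃ T : ℝ, 0 < T ∧
        ∃ u : ℝ → ℝ,
          ContDiffOn ℝ (⊤ : ℕ∞) u (Ioo (-T) T) ∧
          u 0 = d ∧ deriv u 0 = 0 ∧
          (∀ t ∈ Ioo (-T) T,
            0 < 1 - deriv u t ^ 2 ∧
            (1 - deriv u t ^ 2) ^ (k - 1) *
                (deriv (deriv u) t + (((n : ℝ) - 2 * k) / (2 * k)) * (1 - deriv u t ^ 2)) =
              ((n : ℝ) / (2 * k)) * Real.exp (-(2 * k : ℝ) * u t)) ∧
          (∀ t ∈ Ioo (-T) T, Hfun n k (u t) (deriv u t) = Hfun n k d 0) ∧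
          Hfun n k d 0 < 0 ∧
          Tendsto u (𝓝[<] T) (𝓝 (-(1 / (n : ℝ)) * Real.log |Hfun n k d 0|)) ∧
          Tendsto u (𝓝[>] (-T)) (𝓝 (-(1 / (n : ℝ)) * Real.log |Hfun n k d 0|)) ∧
          Tendsto (deriv u) (𝓝[<] T) (𝓝 1) ∧
          Tendsto (deriv u) (𝓝[>] (-T)) (𝓝 (-1)) ∧
          Tendsto (deriv (deriv u)) (𝓝[<] T) atTop ∧
          Tendsto (deriv (deriv u)) (𝓝[>] (-T)) atTop := by
  intro d hd
  have hval : -(1 / (n:ℝ)) * Real.log |Hfun n k d 0| = xstar n k d := by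
    rw [Hfun_d_zero hn hk2 hd, abs_of_neg (cst_neg hn hk2 hd)]
    rfl
  have h0mem : (0:ℝ) ∈ Ioo (-Tmax n k d) (Tmax n k d) := by
    have := Tmax_pos hn hk2 hd
    exact Set.mem_Ioo.2 ⟨by linarith, by linarith⟩
  refine ⟨Tmax n k d, Tmax_pos hn hk2 hd, ufun n k d,
    fun t ht => ((ufun_reg hn hk2 hd ht).1).contDiffWithinAt, ?_, ?_, ?_, ?_, ?_, ?_, ?_, ?_, ?_,
    tendsto_dd_u_top hn hk2 hd, tendsto_dd_u_bot hn hk2 hd⟩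
  · show X0 n k d ((Yfun n k d 0)^2) = d
    rw [Yfun_zero hn hk2 hd]
    simpa using X0_zero hn hk2 hd
  · rw [deriv_ufun hn hk2 hd h0mem, Yfun_zero hn hk2 hd]
  · intro t ht
    have hy := Yfun_mem hn hk2 hd ht
    constructor
    · rw [deriv_ufun hn hk2 hd ht]
      nlinarith [hy.1, hy.2]
    · rw [deriv_ufun hn hk2 hd ht, deriv_deriv_ufun hn hk2 hd ht]
      exact ode_ident hn hk2 hd hy
  · intro t ht
    rw [deriv_ufun hn hk2 hd ht, Hfun_d_zero hn hk2 hd]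
    exact Hfun_orbit hn hk2 hd (Yfun_mem hn hk2 hd ht)
  · rw [Hfun_d_zero hn hk2 hd]
    exact cst_neg hn hk2 hd
  · rw [hval]
    exact tendsto_u_top hn hk2 hd
  · rw [hval]
    exact tendsto_u_bot hn hk2 hd
  · exact tendsto_deriv_u_top hn hk2 hd
  · exact tendsto_deriv_u_bot hn hk2 hd
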